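/- arXiv:2601.18117 — 2 statements merged into one kernel-verified Lean document; each statement's English description precedes it below -/
import Mathlib

section
/- Let B be symmetric with b_ii < 0, diagonally dominant with parameter μ ∈ [0,1), and a ∈ ℝ^N nonzero. Let p* = -(1/2)B⁻¹a and p^{NE} = -(A^{NE})⁻¹a, with R(p) = aᵀp + pᵀBp. Then R(p^{NE})/R(p*) ≥ 4(1-μ)/(2-μ)². -/
/-!
Write `C = -B` and `D = diag C`, so that `A^{NE} = -(C + D)`. With `q = p*` and `p = p^{NE}` we
have `C (2q) = a = (C + D) p`, whence `R(p*) = qᵀCq` and `R(p^{NE}) = pᵀDp`. Diagonal dominance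
gives `mD ≤ C` and `mC ≤ D` as quadratic forms, where `m = 1 - μ`. The vector `w = 2q - p`
satisfies `Cw = Dp`, and the two-sided bound turns into `pᵀCp + wᵀCw ≤ (m + 1/m) pᵀDp`, a matrix
version of `λ + 1/λ ≤ m + 1/m` for `λ ∈ [m, 1/m]`. Hence
`4 qᵀCq = pᵀCp + 2 pᵀDp + wᵀCw ≤ (1 + m)² / m · pᵀDp`.
-/

open Matrix Finset

namespace Matrix

variable {n 𝕜 : Type*} [Fintype n] [Field 𝕜] [LinearOrder 𝕜] [IsStrictOrderedRing 𝕜]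

lemma IsSymm.dotProduct_mulVec_comm {R : Type*} [CommSemiring R] {M : Matrix n n R}
    (hM : M.IsSymm) (x y : n → R) : x ⬝ᵥ M *ᵥ y = y ⬝ᵥ M *ᵥ x := by
  rw [dotProduct_mulVec, ← mulVec_transpose, hM.eq, dotProduct_comm]

lemma IsSymm.dotProduct_mulVec_smul_add_smul {R : Type*} [CommRing R] {M : Matrix n n R}
    (hM : M.IsSymm) (a b : R) (x y : n → R) :
    (a • x + b • y) ⬝ᵥ M *ᵥ (a • x + b • y) =
      a ^ 2 * (x ⬝ᵥ M *ᵥ x) + 2 * a * b * (x ⬝ᵥ M *ᵥ y) + b ^ 2 * (y ⬝ᵥ M *ᵥ y) := by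
  simp only [mulVec_add, mulVec_smul, dotProduct_add, add_dotProduct, dotProduct_smul,
    smul_dotProduct, smul_eq_mul, hM.dotProduct_mulVec_comm y x]
  ring

lemma dotProduct_diagonal_mulVec_self {R : Type*} [CommSemiring R] [DecidableEq n]
    (d x : n → R) : x ⬝ᵥ diagonal d *ᵥ x = ∑ i, d i * x i ^ 2 := by
  simp only [dotProduct, mulVec_diagonal]
  exact sum_congr rfl fun i _ => by ring

lemma dotProduct_diagonal_mulVec_self_pos [DecidableEq n] {d x : n → 𝕜} (hd : ∀ i, 0 < d i)
    (hx : x ≠ 0) : 0 < x ⬝ᵥ diagonal d *ᵥ x := by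
  obtain ⟨i, hi⟩ := Function.ne_iff.mp hx
  rw [dotProduct_diagonal_mulVec_self]
  exact sum_pos' (fun j _ => mul_nonneg (hd j).le (sq_nonneg _))
    ⟨i, mem_univ i, mul_pos (hd i) (sq_pos_iff.mpr hi)⟩

lemma dotProduct_diagonal_mulVec_self_nonneg [DecidableEq n] {d : n → 𝕜} (hd : ∀ i, 0 ≤ d i)
    (x : n → 𝕜) : 0 ≤ x ⬝ᵥ diagonal d *ᵥ x := by
  rw [dotProduct_diagonal_mulVec_self]
  exact sum_nonneg fun i _ => mul_nonneg (hd i) (sq_nonneg _)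

lemma abs_dotProduct_mulVec_self_le {M : Matrix n n 𝕜} (hM : M.IsSymm) (x : n → 𝕜) :
    |x ⬝ᵥ M *ᵥ x| ≤ ∑ i, (∑ j, |M i j|) * x i ^ 2 := by
  have amgm : ∀ i j, |M i j * (x i * x j)| ≤ |M i j| * x i ^ 2 / 2 + |M i j| * x j ^ 2 / 2 := by
    intro i j
    rw [abs_mul, abs_mul]
    nlinarith [abs_nonneg (M i j), sq_nonneg (|x i| - |x j|), sq_abs (x i), sq_abs (x j)]
  have swap : ∑ i, ∑ j, |M i j| * x j ^ 2 / 2 = ∑ i, ∑ j, |M i j| * x i ^ 2 / 2 := by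
    rw [sum_comm]
    exact sum_congr rfl fun i _ => sum_congr rfl fun j _ => by rw [hM.apply]
  calc |x ⬝ᵥ M *ᵥ x| = |∑ i, ∑ j, M i j * (x i * x j)| := by
        simp only [dotProduct, mulVec, mul_sum]
        congr 1
        exact sum_congr rfl fun i _ => sum_congr rfl fun j _ => by ring
    _ ≤ ∑ i, ∑ j, (|M i j| * x i ^ 2 / 2 + |M i j| * x j ^ 2 / 2) :=
        (abs_sum_le_sum_abs _ _).trans <| sum_le_sum fun i _ =>
          (abs_sum_le_sum_abs _ _).trans <| sum_le_sum fun j _ => amgm i j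
    _ = ∑ i, (∑ j, |M i j|) * x i ^ 2 := by
        simp only [sum_add_distrib]
        rw [swap, ← sum_add_distrib]
        exact sum_congr rfl fun i _ => by
          rw [sum_mul, ← sum_add_distrib]; exact sum_congr rfl fun j _ => by ring

lemma dotProduct_mulVec_le_of_sandwich {C D : Matrix n n 𝕜} (hC : C.IsSymm) (hD : D.IsSymm)
    (hD0 : ∀ x, 0 ≤ x ⬝ᵥ D *ᵥ x) {m : 𝕜} (hm0 : 0 ≤ m) (hm1 : m ≤ 1)
    (hDC : ∀ x, m * (x ⬝ᵥ D *ᵥ x) ≤ x ⬝ᵥ C *ᵥ x) (hCD : ∀ x, m * (x ⬝ᵥ C *ᵥ x) ≤ x ⬝ᵥ D *ᵥ x)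
    (x w : n → 𝕜) :
    m * (x ⬝ᵥ C *ᵥ x + 2 * (x ⬝ᵥ D *ᵥ w) - w ⬝ᵥ C *ᵥ w) ≤ (m ^ 2 + 1) * (x ⬝ᵥ D *ᵥ x) := by
  rcases hm1.lt_or_eq with hm1 | rfl
  -- `(1 - m²) (rhs - lhs) = m (mx - w)ᵀ(C - mD)(mx - w) + (x - mw)ᵀ(D - mC)(x - mw)`
  · have h1 := hDC (m • x + (-1 : 𝕜) • w)
    have h2 := hCD ((1 : 𝕜) • x + (-m) • w)
    rw [hC.dotProduct_mulVec_smul_add_smul, hD.dotProduct_mulVec_smul_add_smul] at h1 h2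
    have hm2 : 0 < 1 - m ^ 2 := by nlinarith
    refine sub_nonneg.mp ((mul_nonneg_iff_of_pos_left hm2).mp ?_)
    linear_combination m * h1 + h2
  -- `C` and `D` agree as forms, and `rhs - lhs = (x - w)ᵀD(x - w)`
  · have h := hD0 ((1 : 𝕜) • x + (-1 : 𝕜) • w)
    rw [hD.dotProduct_mulVec_smul_add_smul] at h
    linarith [hDC x, hCD x, hDC w, hCD w]

lemma dotProduct_mulVec_le_of_add_mulVec_eq {C D : Matrix n n 𝕜} (hC : C.IsSymm)
    (hD : D.IsSymm) (hD0 : ∀ x, 0 ≤ x ⬝ᵥ D *ᵥ x) {m : 𝕜} (hm0 : 0 ≤ m) (hm1 : m ≤ 1)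
    (hDC : ∀ x, m * (x ⬝ᵥ D *ᵥ x) ≤ x ⬝ᵥ C *ᵥ x) (hCD : ∀ x, m * (x ⬝ᵥ C *ᵥ x) ≤ x ⬝ᵥ D *ᵥ x)
    {x y : n → 𝕜} (hxy : (C + D) *ᵥ x = C *ᵥ y) :
    m * (y ⬝ᵥ C *ᵥ y) ≤ (1 + m) ^ 2 * (x ⬝ᵥ D *ᵥ x) := by
  set w := y - x
  have hw : C *ᵥ w = D *ᵥ x := by rw [mulVec_sub, ← hxy, add_mulVec]; abel
  have hy : y = (1 : 𝕜) • x + (1 : 𝕜) • w := by simp [w]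
  have h := dotProduct_mulVec_le_of_sandwich hC hD hD0 hm0 hm1 hDC hCD x w
  have hDw : x ⬝ᵥ D *ᵥ w = w ⬝ᵥ C *ᵥ w := by rw [hD.dotProduct_mulVec_comm, hw]
  have hCw : x ⬝ᵥ C *ᵥ w = x ⬝ᵥ D *ᵥ x := by rw [hw]
  rw [hDw] at h
  rw [hy, hC.dotProduct_mulVec_smul_add_smul, hCw]
  linarith

lemma isUnit_det_of_dotProduct_mulVec_ne_zero [DecidableEq n] {K : Type*} [Field K]
    {M : Matrix n n K} (hM : ∀ x ≠ 0, x ⬝ᵥ M *ᵥ x ≠ 0) : IsUnit M.det := by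
  rw [isUnit_iff_ne_zero, Ne, ← exists_mulVec_eq_zero_iff]
  rintro ⟨v, hv, hMv⟩
  exact hM v hv (by rw [hMv, dotProduct_zero])

lemma mulVec_neg_inv_neg_mulVec [DecidableEq n] {K : Type*} [Field K] {M : Matrix n n K}
    (hM : ∀ x ≠ 0, x ⬝ᵥ M *ᵥ x ≠ 0) (a : n → K) : M *ᵥ -((-M)⁻¹ *ᵥ a) = a := by
  have hdet : IsUnit (-M).det := isUnit_det_of_dotProduct_mulVec_ne_zero fun x hx => by
    rw [neg_mulVec, dotProduct_neg, neg_ne_zero]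
    exact hM x hx
  rw [mulVec_neg, ← neg_mulVec, mulVec_mulVec, mul_nonsing_inv _ hdet, one_mulVec]

section DiagDominant

variable [DecidableEq n] {M : Matrix n n 𝕜} {μ : 𝕜}

lemma abs_dotProduct_mulVec_sub_diagonal_le (hM : M.IsSymm) (hdiag : ∀ i, 0 ≤ M i i)
    (hdom : ∀ i, ∑ j ∈ univ.erase i, |M i j| ≤ μ * |M i i|) (x : n → 𝕜) :
    |x ⬝ᵥ M *ᵥ x - x ⬝ᵥ diagonal M.diag *ᵥ x| ≤ μ * (x ⬝ᵥ diagonal M.diag *ᵥ x) := by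
  rw [← dotProduct_sub, ← sub_mulVec, dotProduct_diagonal_mulVec_self, mul_sum]
  refine (abs_dotProduct_mulVec_self_le (hM.sub (isSymm_diagonal _)) x).trans
    (sum_le_sum fun i _ => ?_)
  have hoff : ∑ j, |(M - diagonal M.diag) i j| = ∑ j ∈ univ.erase i, |M i j| := by
    rw [← add_sum_erase _ _ (mem_univ i)]
    simp only [sub_apply, diagonal_apply_eq, diag_apply, sub_self, abs_zero, zero_add]
    exact sum_congr rfl fun j hj => by
      rw [diagonal_apply_ne _ (ne_of_mem_erase hj).symm, sub_zero]
  rw [hoff, diag_apply, ← mul_assoc, ← abs_of_nonneg (hdiag i)]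
  exact mul_le_mul_of_nonneg_right (hdom i) (sq_nonneg _)

lemma one_sub_mul_dotProduct_diagonal_le_of_diagDominant (hM : M.IsSymm)
    (hdiag : ∀ i, 0 ≤ M i i) (hdom : ∀ i, ∑ j ∈ univ.erase i, |M i j| ≤ μ * |M i i|)
    (x : n → 𝕜) : (1 - μ) * (x ⬝ᵥ diagonal M.diag *ᵥ x) ≤ x ⬝ᵥ M *ᵥ x := by
  linarith [(abs_le.mp (abs_dotProduct_mulVec_sub_diagonal_le hM hdiag hdom x)).1]

lemma one_sub_mul_dotProduct_mulVec_le_of_diagDominant (hM : M.IsSymm)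
    (hdiag : ∀ i, 0 ≤ M i i) (hμ1 : μ ≤ 1)
    (hdom : ∀ i, ∑ j ∈ univ.erase i, |M i j| ≤ μ * |M i i|) (x : n → 𝕜) :
    (1 - μ) * (x ⬝ᵥ M *ᵥ x) ≤ x ⬝ᵥ diagonal M.diag *ᵥ x := by
  have hupper := (abs_le.mp (abs_dotProduct_mulVec_sub_diagonal_le hM hdiag hdom x)).2
  have hD0 := dotProduct_diagonal_mulVec_self_nonneg (d := M.diag) hdiag x
  nlinarith [mul_le_mul_of_nonneg_left hupper (sub_nonneg.mpr hμ1), mul_nonneg (sq_nonneg μ) hD0]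

lemma dotProduct_mulVec_pos_of_diagDominant (hM : M.IsSymm) (hdiag : ∀ i, 0 < M i i)
    (hμ1 : μ < 1) (hdom : ∀ i, ∑ j ∈ univ.erase i, |M i j| ≤ μ * |M i i|)
    {x : n → 𝕜} (hx : x ≠ 0) : 0 < x ⬝ᵥ M *ᵥ x :=
  (mul_pos (sub_pos.mpr hμ1) (dotProduct_diagonal_mulVec_self_pos hdiag hx)).trans_le
    (one_sub_mul_dotProduct_diagonal_le_of_diagDominant hM (fun i => (hdiag i).le) hdom x)

lemma dotProduct_mulVec_le_of_diagDominant (hM : M.IsSymm) (hdiag : ∀ i, 0 ≤ M i i)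
    (hμ0 : 0 ≤ μ) (hμ1 : μ ≤ 1) (hdom : ∀ i, ∑ j ∈ univ.erase i, |M i j| ≤ μ * |M i i|)
    {x y : n → 𝕜} (hxy : (M + diagonal M.diag) *ᵥ x = M *ᵥ y) :
    (1 - μ) * (y ⬝ᵥ M *ᵥ y) ≤ (2 - μ) ^ 2 * (x ⬝ᵥ diagonal M.diag *ᵥ x) := by
  have h := dotProduct_mulVec_le_of_add_mulVec_eq hM (isSymm_diagonal _)
    (dotProduct_diagonal_mulVec_self_nonneg hdiag) (sub_nonneg.mpr hμ1) (by linarith)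
    (one_sub_mul_dotProduct_diagonal_le_of_diagDominant hM hdiag hdom)
    (one_sub_mul_dotProduct_mulVec_le_of_diagDominant hM hdiag hμ1 hdom) hxy
  rwa [show 1 + (1 - μ) = 2 - μ by ring] at h

end DiagDominant

end Matrix

def revenue {n R : Type*} [Fintype n] [CommRing R] (a : n → R) (B : Matrix n n R)
    (p : n → R) : R :=
  a ⬝ᵥ p + p ⬝ᵥ B *ᵥ p

section Revenue

variable {n R : Type*} [Fintype n] [CommRing R] {a : n → R} {C : Matrix n n R}

lemma revenue_neg_eq_of_mulVec_two_smul {q : n → R} (hq : C *ᵥ ((2 : R) • q) = a) :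
    revenue a (-C) q = q ⬝ᵥ C *ᵥ q := by
  rw [revenue, dotProduct_comm, ← hq, mulVec_smul, dotProduct_smul, neg_mulVec, dotProduct_neg,
    smul_eq_mul]
  ring

lemma revenue_neg_eq_of_add_mulVec {D : Matrix n n R} {p : n → R} (hp : (C + D) *ᵥ p = a) :
    revenue a (-C) p = p ⬝ᵥ D *ᵥ p := by
  rw [revenue, dotProduct_comm, ← hp, add_mulVec, dotProduct_add, neg_mulVec, dotProduct_neg]
  ring

end Revenue

/-- Worst-case Price of Anarchy bound: for a symmetric, diagonally dominant
demand matrix `B` with negative diagonal, nonzero intercept `a`, centralized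
optimum `p* = -(1/2)B⁻¹a` and Nash equilibrium `p^{NE} = -(A^{NE})⁻¹a`,
the revenue ratio satisfies `R(p^{NE})/R(p*) ≥ 4(1-μ)/(2-μ)²`. -/
theorem stmt14 {N : ℕ} (B : Matrix (Fin N) (Fin N) ℝ) (hB : B.IsHermitian)
    (hdiag : ∀ i, B i i < 0)
    (μ : ℝ) (hμ0 : 0 ≤ μ) (hμ1 : μ < 1)
    (hdom : ∀ i, ∑ j ∈ Finset.univ.erase i, |B i j| ≤ μ * |B i i|)
    (a : Fin N → ℝ) (ha : a ≠ 0)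
    (A : Matrix (Fin N) (Fin N) ℝ)
    (hA : A = B + Matrix.diagonal fun i => B i i)
    (R : (Fin N → ℝ) → ℝ) (hR : ∀ p, R p = a ⬝ᵥ p + p ⬝ᵥ (B *ᵥ p))
    (pstar pNE : Fin N → ℝ)
    (hpstar : pstar = -((1 / 2 : ℝ) • (B⁻¹ *ᵥ a)))
    (hpNE : pNE = -(A⁻¹ *ᵥ a)) :
    R pNE / R pstar ≥ 4 * (1 - μ) / (2 - μ) ^ 2 := by
  obtain ⟨C, rfl⟩ : ∃ C : Matrix (Fin N) (Fin N) ℝ, B = -C := ⟨-B, (neg_neg B).symm⟩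
  obtain rfl : R = revenue a (-C) := funext hR
  have hC : C.IsSymm := isSymm_neg_iff.mp (isHermitian_iff_isSymm.mp hB)
  have hCdiag : ∀ i, 0 < C i i := fun i => neg_lt_zero.mp (hdiag i)
  have hCdom : ∀ i, ∑ j ∈ univ.erase i, |C i j| ≤ μ * |C i i| := by simpa using hdom
  have hCpos : ∀ x ≠ 0, 0 < x ⬝ᵥ C *ᵥ x := fun x =>
    dotProduct_mulVec_pos_of_diagDominant hC hCdiag hμ1 hCdom
  have hCDpos : ∀ x ≠ 0, 0 < x ⬝ᵥ (C + diagonal C.diag) *ᵥ x := fun x hx => by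
    rw [add_mulVec, dotProduct_add]
    exact add_pos (hCpos x hx) (dotProduct_diagonal_mulVec_self_pos hCdiag hx)
  have hq : C *ᵥ ((2 : ℝ) • pstar) = a := by
    rw [hpstar, ← smul_neg, smul_smul, mul_one_div_cancel two_ne_zero, one_smul]
    exact mulVec_neg_inv_neg_mulVec (fun x hx => (hCpos x hx).ne') a
  have hp : (C + diagonal C.diag) *ᵥ pNE = a := by
    have hAC : A = -(C + diagonal C.diag) := by
      rw [hA, neg_add]
      exact congrArg _ (diagonal_neg _).symm
    rw [hpNE, hAC]
    exact mulVec_neg_inv_neg_mulVec (fun x hx => (hCDpos x hx).ne') a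
  have hq0 : pstar ≠ 0 := by
    rintro rfl
    exact ha (by rw [← hq, smul_zero, mulVec_zero])
  have key := dotProduct_mulVec_le_of_diagDominant hC (fun i => (hCdiag i).le) hμ0 hμ1.le hCdom
    (hp.trans hq.symm)
  rw [mulVec_smul, dotProduct_smul, smul_dotProduct, smul_eq_mul, smul_eq_mul] at key
  rw [revenue_neg_eq_of_add_mulVec hp, revenue_neg_eq_of_mulVec_two_smul hq, ge_iff_le,
    div_le_div_iff₀ (pow_pos (by linarith) 2) (hCpos _ hq0)]
  linarith
end

section
/- In the fully symmetric exchangeable model B = -(1+ρ)I + ρ𝟙𝟙ᵀ with μ := (N-1)ρ < 1 and intercept a·𝟙 (a ≠ 0), the centralized optimum is p* = (a/(2(1-μ)))𝟙 with revenue R(p*) = Na²/(4(1-μ)), the Nash equilibrium is p^{NE} = (a/(2-μ))𝟙 with revenue R(p^{NE}) = Na²/(2-μ)², and hence the ratio R(p^{NE})/R(p*) = 4(1-μ)/(2-μ)², showing the worst-case PoA bound is tight. -/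
open Matrix

/-! The matrix with diagonal `d` and off-diagonal `r` acts as `v ↦ (d - r) v + r (∑ v) 𝟙`,
so it has `𝟙` as eigenvector with eigenvalue `d + (n - 1) r` and is invertible when that
eigenvalue and `d - r` are nonzero. For `B` and `A^{NE}` these eigenvalues are `μ - 1` and
`μ - 2`, so `p*` and `p^{NE}` are multiples of `𝟙`, on which `R` is a one-variable quadratic. -/

namespace Matrix

variable {n K : Type*} [Fintype n] [DecidableEq n] [Field K]

theorem ite_mulVec_apply (d r : K) (v : n → K) (i : n) :
    ((of fun i j : n => if i = j then d else r) *ᵥ v) i = (d - r) * v i + r * ∑ j, v j := by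
  have hsplit : ∀ j,
      (if i = j then d else r) * v j = (if i = j then (d - r) * v j else 0) + r * v j := by
    intro j; split_ifs <;> ring
  simp only [mulVec, dotProduct, of_apply, hsplit, Finset.sum_add_distrib, Finset.sum_ite_eq,
    Finset.mem_univ, if_true, Finset.mul_sum]

theorem ite_mulVec_const (d r t : K) :
    (of fun i j : n => if i = j then d else r) *ᵥ (fun _ => t) =
      fun _ => (d + (Fintype.card n - 1) * r) * t := by
  funext i
  rw [ite_mulVec_apply]
  simp only [Finset.sum_const, Finset.card_univ, nsmul_eq_mul]
  ring

theorem sum_ite_mulVec (d r : K) (v : n → K) :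
    ∑ i, ((of fun i j : n => if i = j then d else r) *ᵥ v) i =
      (d + (Fintype.card n - 1) * r) * ∑ i, v i := by
  simp only [ite_mulVec_apply, Finset.sum_add_distrib, ← Finset.mul_sum, Finset.sum_const,
    Finset.card_univ, nsmul_eq_mul]
  ring

theorem isUnit_ite {d r : K} (hdr : d - r ≠ 0) (hm : d + (Fintype.card n - 1) * r ≠ 0) :
    IsUnit (of fun i j : n => if i = j then d else r) := by
  refine mulVec_injective_iff_isUnit.mp fun v w hvw => funext fun i => ?_
  have hsum : ∑ j, v j = ∑ j, w j := by
    apply mul_left_cancel₀ hm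
    rw [← sum_ite_mulVec, ← sum_ite_mulVec, hvw]
  have hi := congrFun hvw i
  rw [ite_mulVec_apply, ite_mulVec_apply, hsum, add_left_inj] at hi
  exact mul_left_cancel₀ hdr hi

theorem ite_inv_mulVec_const {d r : K} (hdr : d - r ≠ 0) (hm : d + (Fintype.card n - 1) * r ≠ 0)
    (a : K) :
    (of fun i j : n => if i = j then d else r)⁻¹ *ᵥ (fun _ => a) =
      fun _ => a / (d + (Fintype.card n - 1) * r) := by
  set M : Matrix n n K := of fun i j => if i = j then d else r
  have hdet : IsUnit M.det := (isUnit_iff_isUnit_det M).mp (isUnit_ite hdr hm)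
  calc M⁻¹ *ᵥ (fun _ => a)
      = M⁻¹ *ᵥ (M *ᵥ fun _ => a / (d + (Fintype.card n - 1) * r)) := by
        rw [ite_mulVec_const, mul_div_cancel₀ a hm]
    _ = _ := by rw [mulVec_mulVec, nonsing_inv_mul M hdet, one_mulVec]

end Matrix

/-- In the fully symmetric exchangeable model with `μ = (N-1)ρ < 1` and
intercept `a𝟙` (`a ≠ 0`): the centralized optimum is `p* = (a/(2(1-μ)))𝟙` with
revenue `Na²/(4(1-μ))`, the Nash equilibrium is `p^{NE} = (a/(2-μ))𝟙` with
revenue `Na²/(2-μ)²`, and the ratio equals `4(1-μ)/(2-μ)²` (tightness of the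
PoA bound). -/
theorem stmt16 {N : ℕ} (hN : 2 ≤ N) (ρ : ℝ) (hρ : 0 ≤ ρ)
    (μ : ℝ) (hμ : μ = ((N : ℝ) - 1) * ρ) (hμ1 : μ < 1)
    (a : ℝ) (ha : a ≠ 0)
    (B A : Matrix (Fin N) (Fin N) ℝ)
    (hB : B = Matrix.of fun i j => if i = j then (-1 : ℝ) else ρ)
    (hA : A = Matrix.of fun i j => if i = j then (-2 : ℝ) else ρ)
    (R : (Fin N → ℝ) → ℝ)
    (hR : ∀ p, R p = (fun _ => a) ⬝ᵥ p + p ⬝ᵥ (B *ᵥ p))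
    (pstar pNE : Fin N → ℝ)
    (hpstar : pstar = -((1 / 2 : ℝ) • (B⁻¹ *ᵥ fun _ => a)))
    (hpNE : pNE = -(A⁻¹ *ᵥ fun _ => a)) :
    (pstar = fun _ => a / (2 * (1 - μ))) ∧
    R pstar = (N : ℝ) * a ^ 2 / (4 * (1 - μ)) ∧
    pNE = (fun _ => a / (2 - μ)) ∧
    R pNE = (N : ℝ) * a ^ 2 / (2 - μ) ^ 2 ∧
    R pNE / R pstar = 4 * (1 - μ) / (2 - μ) ^ 2 := by
  have hN0 : (N : ℝ) ≠ 0 := Nat.cast_ne_zero.mpr (by omega)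
  have h1μ : 1 - μ ≠ 0 := by linarith
  have h2μ : 2 - μ ≠ 0 := by linarith
  have hμB : -1 + ((Fintype.card (Fin N) : ℝ) - 1) * ρ = -(1 - μ) := by
    rw [Fintype.card_fin, hμ]; ring
  have hμA : -2 + ((Fintype.card (Fin N) : ℝ) - 1) * ρ = -(2 - μ) := by
    rw [Fintype.card_fin, hμ]; ring
  have hRconst : ∀ t, R (fun _ => t) = N * t * (a - (1 - μ) * t) := by
    intro t
    rw [hR, hB, ite_mulVec_const, hμB]
    simp only [dotProduct, Finset.sum_const, Finset.card_univ, Fintype.card_fin, nsmul_eq_mul]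
    ring
  have hps : pstar = fun _ => a / (2 * (1 - μ)) := by
    rw [hpstar, hB, ite_inv_mulVec_const (by linarith) (by linarith), hμB]
    funext
    simp only [Pi.neg_apply, Pi.smul_apply, smul_eq_mul]
    field_simp
  have hpn : pNE = fun _ => a / (2 - μ) := by
    rw [hpNE, hA, ite_inv_mulVec_const (by linarith) (by linarith), hμA]
    funext
    simp only [Pi.neg_apply]
    field_simp
  have hRps : R pstar = N * a ^ 2 / (4 * (1 - μ)) := by
    rw [hps, hRconst]; field_simp; ring
  have hRpn : R pNE = N * a ^ 2 / (2 - μ) ^ 2 := by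
    rw [hpn, hRconst]; field_simp; ring
  refine ⟨hps, hRps, hpn, hRpn, ?_⟩
  rw [hRps, hRpn]
  field_simp
end
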